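/- Let A ⊆ F_p be finite and suppose (A−A)/(A−A) = F_p. Then |2A² − 2A²| ≥ (1/2)·min(|A|², p). -/

import Mathlib

/-!
Project `A × A` to `𝔽_p` by `(a, b) ↦ a + ξ b`. By Cauchy–Schwarz the image has at least
`|A|⁴ / E_ξ` points, where `E_ξ` counts the pairs of points of `A × A` identified by the
projection. Distinct points are identified by at most one `ξ`, so averaging over `ξ` gives some
`ξ` with `p E_ξ ≤ p |A|² + |A|⁴`, hence an image of size at least `min(|A|², p) / 2`. Writing
`ξ = (a₁ - a₃) / (a₂ - a₄)`, multiplication by `a₂ - a₄` maps this image injectively into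
`2A² - 2A²`.
-/

open Finset
open scoped Pointwise

namespace Finset

variable {α β : Type*} [DecidableEq β]

def collisions (s : Finset α) (f : α → β) : Finset (α × α) :=
  {x ∈ s ×ˢ s | f x.1 = f x.2}

lemma card_collisions_eq_sum_sq (s : Finset α) (f : α → β) :
    #(s.collisions f) = ∑ c ∈ s.image f, #{a ∈ s | f a = c} ^ 2 := by
  rw [card_eq_sum_card_fiberwise (f := fun x => f x.1) (t := s.image f)]
  · refine sum_congr rfl fun c _ => ?_
    rw [sq, ← card_product]
    congr 1
    ext ⟨a, b⟩
    simp only [collisions, mem_filter, mem_product]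
    constructor
    · rintro ⟨⟨⟨ha, hb⟩, hab⟩, rfl⟩
      exact ⟨⟨ha, rfl⟩, hb, hab.symm⟩
    · rintro ⟨⟨ha, rfl⟩, hb, hba⟩
      exact ⟨⟨⟨ha, hb⟩, hba.symm⟩, rfl⟩
  · intro x hx
    simp only [collisions, mem_coe, mem_filter, mem_product] at hx
    exact mem_coe.2 (mem_image_of_mem f hx.1.1)

lemma card_sq_le_card_image_mul_card_collisions (s : Finset α) (f : α → β) :
    #s ^ 2 ≤ #(s.image f) * #(s.collisions f) := by
  rw [card_eq_sum_card_image f s, card_collisions_eq_sum_sq]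
  exact sq_sum_le_card_mul_sum_sq

end Finset

section LineProjections

variable {K : Type*} [Field K] [Fintype K] [DecidableEq K]

lemma card_filter_add_mul_eq_le_one {q r : K × K} (hqr : q ≠ r) :
    #{ξ : K | q.1 + ξ * q.2 = r.1 + ξ * r.2} ≤ 1 := by
  refine card_le_one.2 fun ξ hξ ζ hζ => ?_
  simp only [mem_filter, mem_univ, true_and] at hξ hζ
  have hprod : (ξ - ζ) * (q.2 - r.2) = 0 := by linear_combination hξ - hζ
  rcases mul_eq_zero.1 hprod with h | h
  · exact sub_eq_zero.1 h
  · have h₂ : q.2 = r.2 := sub_eq_zero.1 h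
    rw [h₂, add_left_inj] at hξ
    exact absurd (Prod.ext hξ h₂) hqr

/-- Only the `#P` diagonal pairs collide for every `ξ`; any other pair for at most one. -/
lemma sum_card_collisions_add_mul_le (P : Finset (K × K)) :
    ∑ ξ : K, #(P.collisions fun q => q.1 + ξ * q.2) ≤ #P * Fintype.card K + #P ^ 2 := by
  calc ∑ ξ : K, #(P.collisions fun q => q.1 + ξ * q.2)
      = ∑ x ∈ P ×ˢ P, #{ξ : K | x.1.1 + ξ * x.1.2 = x.2.1 + ξ * x.2.2} := by
        simp only [collisions, card_filter]
        exact sum_comm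
    _ ≤ ∑ x ∈ P ×ˢ P, ((if x.1 = x.2 then Fintype.card K else 0) + 1) := by
        refine sum_le_sum fun x _ => ?_
        split_ifs with hx
        · exact (card_filter_le _ _).trans (Nat.le_succ _)
        · exact (card_filter_add_mul_eq_le_one hx).trans_eq (zero_add 1).symm
    _ = #P * Fintype.card K + #P ^ 2 := by
        rw [sum_add_distrib, ← sum_filter, sum_const, sum_const, card_product,
          ← diag_eq_filter, diag_card, smul_eq_mul, smul_eq_mul, mul_one, sq]

lemma exists_mul_card_collisions_add_mul_le (P : Finset (K × K)) :
    ∃ ξ : K, Fintype.card K * #(P.collisions fun q => q.1 + ξ * q.2) ≤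
      #P * Fintype.card K + #P ^ 2 := by
  obtain ⟨ξ, -, hξ⟩ := exists_le_of_sum_le (s := univ)
    (f := fun ξ : K => Fintype.card K * #(P.collisions fun q => q.1 + ξ * q.2))
    (g := fun _ => #P * Fintype.card K + #P ^ 2) univ_nonempty <| by
      rw [← mul_sum, sum_const, card_univ, smul_eq_mul]
      exact Nat.mul_le_mul_left _ (sum_card_collisions_add_mul_le P)
  exact ⟨ξ, hξ⟩

lemma min_le_two_mul_of_mul_sq_le {n k s : ℕ} (h : k * n ^ 2 ≤ s * (n * k + n ^ 2)) :
    min n k ≤ 2 * s := by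
  rcases Nat.eq_zero_or_pos n with rfl | hn
  · simp
  have h' : k * n ≤ s * (k + n) :=
    Nat.le_of_mul_le_mul_left (by linarith) hn
  rcases le_total n k with hnk | hkn
  · rw [min_eq_left hnk]; nlinarith
  · rw [min_eq_right hkn]; nlinarith

lemma exists_min_le_two_mul_card_image_add_mul (P : Finset (K × K)) :
    ∃ ξ : K, min #P (Fintype.card K) ≤ 2 * #(P.image fun q => q.1 + ξ * q.2) := by
  obtain ⟨ξ, hξ⟩ := exists_mul_card_collisions_add_mul_le P
  refine ⟨ξ, min_le_two_mul_of_mul_sq_le ?_⟩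
  calc Fintype.card K * #P ^ 2
      ≤ Fintype.card K * (#(P.image fun q => q.1 + ξ * q.2) *
          #(P.collisions fun q => q.1 + ξ * q.2)) :=
        Nat.mul_le_mul_left _ (card_sq_le_card_image_mul_card_collisions _ _)
    _ = #(P.image fun q => q.1 + ξ * q.2) *
          (Fintype.card K * #(P.collisions fun q => q.1 + ξ * q.2)) := by ring
    _ ≤ _ := Nat.mul_le_mul_left _ hξ

end LineProjections

lemma card_image_add_div_mul_le {K : Type*} [Field K] [DecidableEq K] {A : Finset K}
    {a₁ a₂ a₃ a₄ : K} (ha₁ : a₁ ∈ A) (ha₂ : a₂ ∈ A) (ha₃ : a₃ ∈ A) (ha₄ : a₄ ∈ A)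
    (hne : a₂ ≠ a₄) :
    #((A ×ˢ A).image fun q => q.1 + (a₁ - a₃) / (a₂ - a₄) * q.2) ≤
      #(A * A + A * A - (A * A + A * A)) := by
  have hd : a₂ - a₄ ≠ 0 := sub_ne_zero.2 hne
  refine card_le_card_of_injOn (fun x => (a₂ - a₄) * x) ?_ (mul_right_injective₀ hd).injOn
  rintro _ hx
  obtain ⟨⟨a, b⟩, hab, rfl⟩ := mem_image.1 hx
  obtain ⟨ha, hb⟩ := mem_product.1 hab
  have hscale : (a₂ - a₄) * (a + (a₁ - a₃) / (a₂ - a₄) * b) =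
      (a * a₂ + a₁ * b) - (a * a₄ + a₃ * b) := by
    field_simp
    ring
  simp only [mem_coe]
  rw [hscale]
  exact sub_mem_sub (add_mem_add (mul_mem_mul ha ha₂) (mul_mem_mul ha₁ hb))
    (add_mem_add (mul_mem_mul ha ha₄) (mul_mem_mul ha₃ hb))

theorem stmt_19 (p : ℕ) [Fact p.Prime] (A : Finset (ZMod p))
    (h : ∀ ξ : ZMod p, ξ = 0 ∨ ∃ a₁ ∈ A, ∃ a₂ ∈ A, ∃ a₃ ∈ A, ∃ a₄ ∈ A,
        a₂ ≠ a₄ ∧ ξ = (a₁ - a₃) / (a₂ - a₄)) :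
    (1 / 2 : ℝ) * min ((A.card : ℝ) ^ 2) (p : ℝ) ≤
      (((A * A + A * A) - (A * A + A * A)).card : ℝ) := by
  have hquot : ∀ ξ : ZMod p, ∃ a₁ ∈ A, ∃ a₂ ∈ A, ∃ a₃ ∈ A, ∃ a₄ ∈ A,
      a₂ ≠ a₄ ∧ ξ = (a₁ - a₃) / (a₂ - a₄) := by
    intro ξ
    refine (h ξ).elim (fun hξ => ?_) id
    obtain ⟨-, -, b₂, hb₂, -, -, b₄, hb₄, hne, -⟩ := (h 1).resolve_left one_ne_zero
    exact ⟨b₂, hb₂, b₂, hb₂, b₂, hb₂, b₄, hb₄, hne, by simp [hξ]⟩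
  obtain ⟨ξ, hξ⟩ := exists_min_le_two_mul_card_image_add_mul (A ×ˢ A)
  obtain ⟨a₁, ha₁, a₂, ha₂, a₃, ha₃, a₄, ha₄, hne, rfl⟩ := hquot ξ
  have hmin : min (#A ^ 2) p ≤ 2 * #(A * A + A * A - (A * A + A * A)) := by
    rw [card_product, ← sq, ZMod.card] at hξ
    exact hξ.trans (Nat.mul_le_mul_left 2 (card_image_add_div_mul_le ha₁ ha₂ ha₃ ha₄ hne))
  have hmin' : min ((#A : ℝ) ^ 2) p ≤ 2 * #(A * A + A * A - (A * A + A * A)) :=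
    mod_cast hmin
  linarith
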